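/- arXiv:1812.10371 — 5 statements merged into one kernel-verified Lean document; each statement's English description precedes it below -/
import Mathlib

section
/- (Duality for the box distribution set.) Let π^nom ∈ S_K, let ρ ∈ ℝ^K with ρ ≥ 0, and let Π = {π ∈ S_K : |π − π^nom| ≤ ρ componentwise}. Then for every x ∈ ℝ^K, inf_{π ∈ Π} πᵀ x = sup_{λ ∈ ℝ^K} ( min_k (x + λ)_k − (π^nom)ᵀλ − ρᵀ|λ| ), where |λ| denotes the componentwise absolute value and min_k denotes the smallest entry of a vector in ℝ^K. -/
open Matrix Finset

/-- Duality for the box distribution set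
`Π = {π ∈ S_K : |π − π^nom| ≤ ρ}`: for every `x`,
`inf_{π ∈ Π} πᵀ x = sup_{λ} ( min_k (x + λ)_k − (π^nom)ᵀ λ − ρᵀ |λ| )`. -/
theorem box_duality (K : ℕ) (πnom : Fin K → ℝ)
    (hπnom : ∀ k, 0 ≤ πnom k) (hπnom1 : ∑ k, πnom k = 1)
    (ρ : Fin K → ℝ) (hρ : ∀ k, 0 ≤ ρ k) (x : Fin K → ℝ) :
    sInf {v : ℝ | ∃ π : Fin K → ℝ, (∀ k, 0 ≤ π k) ∧ ∑ k, π k = 1 ∧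
        (∀ k, |π k - πnom k| ≤ ρ k) ∧ v = ∑ k, π k * x k} =
      sSup {v : ℝ | ∃ lam : Fin K → ℝ,
        v = (⨅ k : Fin K, (x + lam) k) - ∑ k, πnom k * lam k - ∑ k, ρ k * |lam k|} := by
  classical
  have hK : 0 < K := by
    rcases Nat.eq_zero_or_pos K with h | h
    · exfalso; subst h; simp at hπnom1
    · exact h
  haveI : Nonempty (Fin K) := ⟨⟨0, hK⟩⟩
  set S : Set ℝ := {v : ℝ | ∃ π : Fin K → ℝ, (∀ k, 0 ≤ π k) ∧ ∑ k, π k = 1 ∧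
        (∀ k, |π k - πnom k| ≤ ρ k) ∧ v = ∑ k, π k * x k} with hS
  set T : Set ℝ := {v : ℝ | ∃ lam : Fin K → ℝ,
        v = (⨅ k : Fin K, (x + lam) k) - ∑ k, πnom k * lam k - ∑ k, ρ k * |lam k|} with hT
  -- weak duality
  have weak : ∀ v ∈ S, ∀ w ∈ T, w ≤ v := by
    rintro v ⟨π, hpos, hsum1, habs, rfl⟩ w ⟨lam, rfl⟩
    have hb : BddBelow (Set.range fun k => (x + lam) k) :=
      Set.Finite.bddBelow (Set.finite_range _)
    have h1 : (⨅ k : Fin K, (x + lam) k) ≤ ∑ k, π k * (x k + lam k) := by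
      calc (⨅ k : Fin K, (x + lam) k) = ∑ k, π k * (⨅ j : Fin K, (x + lam) j) := by
            rw [← Finset.sum_mul, hsum1, one_mul]
        _ ≤ ∑ k, π k * (x k + lam k) := by
            refine Finset.sum_le_sum fun k _ => mul_le_mul_of_nonneg_left ?_ (hpos k)
            simpa using ciInf_le hb k
    have h2 : ∑ k, π k * lam k - ∑ k, πnom k * lam k ≤ ∑ k, ρ k * |lam k| := by
      rw [← Finset.sum_sub_distrib]
      refine Finset.sum_le_sum fun k _ => ?_
      calc π k * lam k - πnom k * lam k = (π k - πnom k) * lam k := by ring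
        _ ≤ |(π k - πnom k) * lam k| := le_abs_self _
        _ = |π k - πnom k| * |lam k| := abs_mul _ _
        _ ≤ ρ k * |lam k| := mul_le_mul_of_nonneg_right (habs k) (abs_nonneg _)
    have h3 : ∑ k, π k * (x k + lam k) = ∑ k, π k * x k + ∑ k, π k * lam k := by
      rw [← Finset.sum_add_distrib]
      exact Finset.sum_congr rfl fun k _ => by ring
    linarith
  have hSne : S.Nonempty :=
    ⟨∑ k, πnom k * x k, πnom, hπnom, hπnom1, fun k => by simpa using hρ k, rfl⟩
  have hTne : T.Nonempty := ⟨_, 0, rfl⟩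
  have hSbdd : BddBelow S := by
    obtain ⟨w0, hw0⟩ := hTne
    exact ⟨w0, fun v hv => weak v hv w0 hw0⟩
  have hTbdd : BddAbove T := by
    obtain ⟨v0, hv0⟩ := hSne
    exact ⟨v0, fun w hw => weak v0 hv0 w hw⟩
  -- the bounds l, u of the box
  set l : Fin K → ℝ := fun k => max 0 (πnom k - ρ k) with hl
  set u : Fin K → ℝ := fun k => πnom k + ρ k with hu
  have hl0 : ∀ k, 0 ≤ l k := fun k => le_max_left _ _
  have hlπρ : ∀ k, πnom k - ρ k ≤ l k := fun k => le_max_right _ _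
  have hlπ : ∀ k, l k ≤ πnom k := fun k => max_le (hπnom k) (by linarith [hρ k])
  have hπu : ∀ k, πnom k ≤ u k := fun k => by simp only [hu]; linarith [hρ k]
  have hlu : ∀ k, l k ≤ u k := fun k => (hlπ k).trans (hπu k)
  have hsl : ∑ k, l k ≤ 1 := by
    rw [← hπnom1]; exact Finset.sum_le_sum fun k _ => hlπ k
  have hsu : 1 ≤ ∑ k, u k := by
    rw [← hπnom1] at *; exact Finset.sum_le_sum fun k _ => hπu k
  -- the threshold m
  set P : Fin K → Prop := fun k => 1 ≤ ∑ j, if x j ≤ x k then u j else l j with hP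
  obtain ⟨k0, -, hk0⟩ := Finset.exists_max_image Finset.univ x ⟨⟨0, hK⟩, Finset.mem_univ _⟩
  have hPk0 : P k0 := by
    have : ∑ j, (if x j ≤ x k0 then u j else l j) = ∑ j, u j :=
      Finset.sum_congr rfl fun j _ => if_pos (hk0 j (Finset.mem_univ _))
    simp only [hP, this]; exact hsu
  obtain ⟨ks, hksmem, hksmin⟩ := Finset.exists_min_image (Finset.univ.filter P) x
    ⟨k0, Finset.mem_filter.mpr ⟨Finset.mem_univ _, hPk0⟩⟩
  set m : ℝ := x ks with hm
  have hA_le : 1 ≤ ∑ j, if x j ≤ m then u j else l j :=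
    (Finset.mem_filter.mp hksmem).2
  have hA_lt : ∑ j, (if x j < m then u j else l j) ≤ 1 := by
    by_cases hcase : ∃ j, x j < m
    · obtain ⟨j1, hj1⟩ := hcase
      obtain ⟨j0, hj0mem, hj0max⟩ := Finset.exists_max_image
        (Finset.univ.filter fun j => x j < m) x
        ⟨j1, Finset.mem_filter.mpr ⟨Finset.mem_univ _, hj1⟩⟩
      have hj0 : x j0 < m := (Finset.mem_filter.mp hj0mem).2
      have hiff : ∀ j, (x j < m) ↔ (x j ≤ x j0) := fun j =>
        ⟨fun h => hj0max j (Finset.mem_filter.mpr ⟨Finset.mem_univ _, h⟩),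
         fun h => lt_of_le_of_lt h hj0⟩
      have hrw : ∑ j, (if x j < m then u j else l j)
          = ∑ j, (if x j ≤ x j0 then u j else l j) :=
        Finset.sum_congr rfl fun j _ => by rw [if_congr (hiff j) rfl rfl]
      have hj0notP : ¬ P j0 := by
        intro hPj0
        exact absurd (hksmin j0 (Finset.mem_filter.mpr ⟨Finset.mem_univ _, hPj0⟩))
          (not_le.mpr hj0)
      rw [hrw]
      exact le_of_lt (not_le.mp hj0notP)
    · push_neg at hcase
      have : ∑ j, (if x j < m then u j else l j) = ∑ j, l j :=
        Finset.sum_congr rfl fun j _ => if_neg (not_lt.mpr (hcase j))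
      rw [this]; exact hsl
  set Aless : ℝ := ∑ j, (if x j < m then u j else l j) with hAless
  set B : ℝ := ∑ j, (if x j = m then u j - l j else 0) with hB
  have hAB : (∑ j, (if x j ≤ m then u j else l j)) = Aless + B := by
    rw [hAless, hB, ← Finset.sum_add_distrib]
    refine Finset.sum_congr rfl fun j _ => ?_
    rcases lt_trichotomy (x j) m with h | h | h
    · rw [if_pos h.le, if_pos h, if_neg h.ne]; ring
    · rw [if_pos h.le, if_neg (by simp [h]), if_pos h]; ring
    · rw [if_neg (not_le.mpr h), if_neg (lt_asymm h), if_neg h.ne']; ring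
  have hB0 : 0 ≤ B := Finset.sum_nonneg fun j _ => by
    split_ifs with h
    · linarith [hlu j]
    · exact le_rfl
  set θ : ℝ := if B = 0 then 0 else (1 - Aless) / B with hθ
  have hkey : Aless + θ * B = 1 ∧ 0 ≤ θ ∧ θ ≤ 1 := by
    by_cases hb : B = 0
    · have h1 : (1 : ℝ) ≤ Aless := by rw [hAB, hb, add_zero] at hA_le; exact hA_le
      refine ⟨?_, ?_, ?_⟩ <;> simp [hθ, hb] <;> linarith
    · have hbpos : 0 < B := lt_of_le_of_ne hB0 (Ne.symm hb)
      have h1 : 1 ≤ Aless + B := by rw [← hAB]; exact hA_le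
      have hθval : θ = (1 - Aless) / B := if_neg hb
      refine ⟨?_, ?_, ?_⟩
      · rw [hθval, div_mul_cancel₀ _ hb]; ring
      · rw [hθval]; exact div_nonneg (by linarith) hB0
      · rw [hθval, div_le_one hbpos]; linarith
  obtain ⟨hθsum, hθ0, hθ1⟩ := hkey
  -- primal optimal solution
  set πs : Fin K → ℝ := fun k =>
    if x k < m then u k else if x k = m then (1 - θ) * l k + θ * u k else l k with hπs
  have hπs_lb : ∀ k, l k ≤ πs k := by
    intro k; simp only [hπs]
    split_ifs with h1 h2
    · exact hlu k
    · nlinarith [hlu k]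
    · exact le_rfl
  have hπs_ub : ∀ k, πs k ≤ u k := by
    intro k; simp only [hπs]
    split_ifs with h1 h2
    · exact le_rfl
    · nlinarith [hlu k]
    · exact hlu k
  have hπs_pos : ∀ k, 0 ≤ πs k := fun k => (hl0 k).trans (hπs_lb k)
  have hπs_abs : ∀ k, |πs k - πnom k| ≤ ρ k := by
    intro k
    rw [abs_le]
    constructor
    · have := (hlπρ k).trans (hπs_lb k); linarith
    · have := hπs_ub k; simp only [hu] at this; linarith
  have hπs_sum : ∑ k, πs k = 1 := by
    have hterm : ∀ k, πs k = (if x k < m then u k else l k)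
        + (if x k = m then θ * (u k - l k) else 0) := by
      intro k; simp only [hπs]
      rcases lt_trichotomy (x k) m with h | h | h
      · rw [if_pos h, if_pos h, if_neg h.ne]; ring
      · rw [if_neg (by simp [h]), if_pos h, if_neg (by simp [h]), if_pos h]; ring
      · rw [if_neg (lt_asymm h), if_neg h.ne', if_neg (lt_asymm h), if_neg h.ne']; ring
    calc ∑ k, πs k = ∑ k, ((if x k < m then u k else l k)
          + (if x k = m then θ * (u k - l k) else 0)) :=
          Finset.sum_congr rfl fun k _ => hterm k
      _ = Aless + ∑ k, (if x k = m then θ * (u k - l k) else 0) := by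
          rw [Finset.sum_add_distrib]
      _ = Aless + θ * B := by
          congr 1
          rw [hB, Finset.mul_sum]
          exact Finset.sum_congr rfl fun k _ => by split_ifs <;> simp
      _ = 1 := hθsum
  -- dual optimal solution
  set lam : Fin K → ℝ := fun k =>
    if ρ k ≤ πnom k then m - x k else max (m - x k) 0 with hlam
  have hxlam : ∀ k, m ≤ x k + lam k := by
    intro k; simp only [hlam]
    split_ifs
    · linarith
    · have : m - x k ≤ max (m - x k) 0 := le_max_left _ _
      linarith
  have hcost : ∀ k, πnom k * lam k + ρ k * |lam k|
      = u k * max (m - x k) 0 - l k * max (x k - m) 0 := by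
    intro k
    by_cases hk : ρ k ≤ πnom k
    · have hlk : l k = πnom k - ρ k := max_eq_right (by linarith)
      simp only [hlam, if_pos hk, hlk, hu]
      rcases le_total (x k) m with h | h
      · rw [abs_of_nonneg (by linarith), max_eq_left (by linarith : (0:ℝ) ≤ m - x k),
          max_eq_right (by linarith : x k - m ≤ (0:ℝ))]
        ring
      · rw [abs_of_nonpos (by linarith), max_eq_right (by linarith : m - x k ≤ (0:ℝ)),
          max_eq_left (by linarith : (0:ℝ) ≤ x k - m)]
        ring
    · have hlk : l k = 0 := max_eq_left (by push_neg at hk; linarith)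
      simp only [hlam, if_neg hk, hlk, hu]
      rw [abs_of_nonneg (le_max_right _ _)]
      ring
  have hval : ∑ k, πs k * x k
      = m - (∑ k, u k * max (m - x k) 0 - ∑ k, l k * max (x k - m) 0) := by
    have hterm : ∀ k, m * πs k - u k * max (m - x k) 0 + l k * max (x k - m) 0
        = πs k * x k := by
      intro k
      rcases lt_trichotomy (x k) m with h | h | h
      · have h1 : πs k = u k := by simp only [hπs]; rw [if_pos h]
        rw [h1, max_eq_right (by linarith : x k - m ≤ (0:ℝ)),
          max_eq_left (by linarith : (0:ℝ) ≤ m - x k)]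
        ring
      · have h1 : max (x k - m) 0 = 0 := max_eq_right (by linarith)
        have h2 : max (m - x k) 0 = 0 := max_eq_right (by linarith)
        rw [h1, h2, h]; ring
      · have h1 : πs k = l k := by
          simp only [hπs]; rw [if_neg (lt_asymm h), if_neg h.ne']
        rw [h1, max_eq_left (by linarith : (0:ℝ) ≤ x k - m),
          max_eq_right (by linarith : m - x k ≤ (0:ℝ))]
        ring
    have h1 : ∑ k, (m * πs k - u k * max (m - x k) 0 + l k * max (x k - m) 0)
        = ∑ k, πs k * x k := Finset.sum_congr rfl fun k _ => hterm k
    have h2 : ∑ k, (m * πs k - u k * max (m - x k) 0 + l k * max (x k - m) 0)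
        = m * ∑ k, πs k - ∑ k, u k * max (m - x k) 0
          + ∑ k, l k * max (x k - m) 0 := by
      rw [Finset.sum_add_distrib, Finset.sum_sub_distrib, Finset.mul_sum]
    rw [← h1, h2, hπs_sum]; ring
  have hcostsum : ∑ k, πnom k * lam k + ∑ k, ρ k * |lam k|
      = ∑ k, u k * max (m - x k) 0 - ∑ k, l k * max (x k - m) 0 := by
    rw [← Finset.sum_add_distrib, ← Finset.sum_sub_distrib]
    exact Finset.sum_congr rfl fun k _ => hcost k
  have hinf : m ≤ ⨅ k : Fin K, (x + lam) k :=
    le_ciInf fun k => by simpa using hxlam k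
  have hG : ∑ k, πs k * x k
      ≤ (⨅ k : Fin K, (x + lam) k) - ∑ k, πnom k * lam k - ∑ k, ρ k * |lam k| := by
    linarith
  apply le_antisymm
  · calc sInf S ≤ ∑ k, πs k * x k :=
        csInf_le hSbdd ⟨πs, hπs_pos, hπs_sum, hπs_abs, rfl⟩
      _ ≤ (⨅ k : Fin K, (x + lam) k) - ∑ k, πnom k * lam k
          - ∑ k, ρ k * |lam k| := hG
      _ ≤ sSup T := le_csSup hTbdd ⟨lam, rfl⟩
  · exact csSup_le hTne fun w hw => le_csInf hSne fun v hv => weak v hv w hw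
end

section
/- (Duality for the ellipsoidal distribution set.) Let p ∈ (1,∞) and q satisfy 1/p + 1/q = 1, let W ∈ ℝ^{K×K} be invertible, let π^nom ∈ S_K, and let Π = {π ∈ S_K : ‖W^{-1}(π − π^nom)‖_p ≤ 1}. Assume the Slater condition: there exists π ∈ ℝ^K with π > 0 componentwise, 𝟏ᵀπ = 1, and ‖W^{-1}(π − π^nom)‖_p < 1. Then for every y ∈ ℝ^K, inf_{π ∈ Π} πᵀ y = sup{ (π^nom)ᵀ(y − λ) − ‖Wᵀ(λ − y − μ𝟏)‖_q : μ ∈ ℝ, λ ∈ ℝ^K, λ ≥ 0 }. -/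
/-!
Write `c = y - λ + μ𝟏`. Then the Lagrangian `πᵀy - λᵀπ + μ(𝟏ᵀπ - 1)` equals `πᵀc - μ`. On the
ellipsoid `π = π^nom + W z` with `‖z‖_p ≤ 1`, so by Hölder's inequality and its equality case
the minimum of `πᵀc` there is `(π^nom)ᵀc - ‖Wᵀc‖_q`. That makes the dual objective the minimum of
the Lagrangian over the ellipsoid, which gives weak duality at once.

For strong duality, take `v` below the primal value and separate `(0, 1, v)` from the convex set
of points `(u, s, t)` for which some `π` in the ellipsoid has `-π ≤ u`, `𝟏ᵀπ = s` and
`πᵀy ≤ t`. The Slater point `π₀` puts `(0, 1, π₀ᵀy + 1)` in the interior of that set, so the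
separating functional has a positive weight on the objective. Dividing by this weight gives
multipliers `λ ≥ 0` and `μ` whose dual value is at least `v`.
-/

open Matrix Finset
open Filter Topology

noncomputable def pNorm {ι : Type*} [Fintype ι] (r : ℝ) (x : ι → ℝ) : ℝ :=
  (∑ k, |x k| ^ r) ^ (1 / r)

variable {ι : Type*} [Fintype ι]

section pNorm

lemma pNorm_eq_norm {r : ℝ} (hr : 0 < r) (x : ι → ℝ) :
    pNorm r x = ‖WithLp.toLp (ENNReal.ofReal r) x‖ := by
  rw [PiLp.norm_eq_sum (by rwa [ENNReal.toReal_ofReal hr.le])]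
  simp [pNorm, hr.le]

lemma pNorm_nonneg (r : ℝ) (x : ι → ℝ) : 0 ≤ pNorm r x := by
  unfold pNorm
  positivity

lemma pNorm_zero {r : ℝ} (hr : 0 < r) : pNorm r (0 : ι → ℝ) = 0 := by
  simp [pNorm, Real.zero_rpow hr.ne', Real.zero_rpow (inv_ne_zero hr.ne')]

lemma pNorm_pos {r : ℝ} (hr : 1 ≤ r) {x : ι → ℝ} (hx : x ≠ 0) : 0 < pNorm r x := by
  have : Fact (1 ≤ ENNReal.ofReal r) := ⟨by simpa using hr⟩
  rw [pNorm_eq_norm (zero_lt_one.trans_le hr), norm_pos_iff]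
  simpa using hx

lemma pNorm_neg (r : ℝ) (x : ι → ℝ) : pNorm r (-x) = pNorm r x := by
  simp [pNorm]

lemma continuous_pNorm {r : ℝ} (hr : 0 < r) : Continuous (pNorm (ι := ι) r) := by
  unfold pNorm
  fun_prop (disch := positivity)

lemma convexOn_pNorm {r : ℝ} (hr : 1 ≤ r) : ConvexOn ℝ Set.univ (pNorm (ι := ι) r) := by
  have : Fact (1 ≤ ENNReal.ofReal r) := ⟨by simpa using hr⟩
  refine ⟨convex_univ, fun x _ z _ a b ha hb _ => ?_⟩
  simp only [pNorm_eq_norm (zero_lt_one.trans_le hr), smul_eq_mul, WithLp.toLp_add,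
    WithLp.toLp_smul]
  calc _ ≤ ‖a • WithLp.toLp (ENNReal.ofReal r) x‖ + ‖b • WithLp.toLp (ENNReal.ofReal r) z‖ :=
        norm_add_le _ _
    _ = _ := by rw [norm_smul, norm_smul, Real.norm_of_nonneg ha, Real.norm_of_nonneg hb]

lemma sum_abs_div_pNorm_rpow {r : ℝ} (hr : 1 ≤ r) {x : ι → ℝ} (hx : x ≠ 0) :
    ∑ k, (|x k| / pNorm r x) ^ r = 1 := by
  have hN := pNorm_pos hr hx
  have hNr : pNorm r x ^ r = ∑ k, |x k| ^ r := by
    rw [pNorm, ← Real.rpow_mul (by positivity), one_div_mul_cancel (by linarith), Real.rpow_one]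
  simp_rw [Real.div_rpow (abs_nonneg _) hN.le, ← Finset.sum_div, hNr]
  exact div_self (hNr ▸ (Real.rpow_pos_of_pos hN r).ne')

variable {p q : ℝ}

lemma neg_pNorm_le_dotProduct (hpq : p.HolderConjugate q) {z : ι → ℝ} (hz : pNorm p z ≤ 1)
    (w : ι → ℝ) : -pNorm q w ≤ z ⬝ᵥ w := by
  have h := Real.inner_le_Lp_mul_Lq Finset.univ (-z) w hpq
  change (-z) ⬝ᵥ w ≤ pNorm p (-z) * pNorm q w at h
  rw [neg_dotProduct, pNorm_neg] at h
  nlinarith [pNorm_nonneg q w]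

lemma exists_pNorm_le_one_dotProduct_eq (hpq : p.HolderConjugate q) (w : ι → ℝ) :
    ∃ z : ι → ℝ, pNorm p z ≤ 1 ∧ z ⬝ᵥ w = pNorm q w := by
  have hqp : q.HolderConjugate p := hpq.symm
  obtain rfl | hw := eq_or_ne w 0
  · exact ⟨0, by simp [pNorm_zero hpq.pos], by simp [pNorm_zero hqp.pos]⟩
  have hsum := sum_abs_div_pNorm_rpow hqp.lt.le hw
  have hN : 0 < pNorm q w := pNorm_pos hqp.lt.le hw
  set N := pNorm q w
  refine ⟨fun k => SignType.sign (w k) * (|w k| / N) ^ (q - 1), ?_, ?_⟩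
  · have habs : ∀ k, |(SignType.sign (w k) : ℝ) * (|w k| / N) ^ (q - 1)| ^ p =
        (|w k| / N) ^ q := by
      intro k
      obtain hk | hk := eq_or_ne (w k) 0
      · simp [hk, Real.zero_rpow hpq.ne_zero, Real.zero_rpow hqp.ne_zero,
          Real.zero_rpow hqp.sub_one_ne_zero]
      · have hsign : |(SignType.sign (w k) : ℝ)| = 1 := by
          rcases hk.lt_or_gt with h | h <;> simp [h]
        rw [abs_mul, hsign, one_mul, abs_of_nonneg (by positivity),
          ← Real.rpow_mul (by positivity), hqp.sub_one_mul_conj]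
    simp only [pNorm, habs, hsum, Real.one_rpow, le_refl]
  · have hmul : ∀ k, (SignType.sign (w k) : ℝ) * (|w k| / N) ^ (q - 1) * w k =
        N * (|w k| / N) ^ q := by
      intro k
      rw [mul_right_comm, sign_mul_self, ← add_sub_cancel 1 q,
        Real.rpow_add' (by positivity) (by simpa using hqp.ne_zero), add_sub_cancel_left,
        Real.rpow_one, ← mul_assoc, mul_div_cancel₀ _ hN.ne']
    simp only [dotProduct, hmul, ← Finset.mul_sum, hsum, mul_one]

end pNorm

lemma StrongDual.exists_eq_dotProduct_add (f : StrongDual ℝ ((ι → ℝ) × ℝ × ℝ)) :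
    ∃ (a : ι → ℝ) (b c : ℝ), ∀ u s t, f (u, s, t) = u ⬝ᵥ a + s * b + t * c := by
  classical
  refine ⟨fun k => f (Pi.single k 1, 0, 0), f (0, 1, 0), f (0, 0, 1), fun u s t => ?_⟩
  have hdecomp : ((u, s, t) : (ι → ℝ) × ℝ × ℝ) =
      ∑ k, u k • ((Pi.single k 1 : ι → ℝ), (0 : ℝ), (0 : ℝ)) +
        s • ((0 : ι → ℝ), (1 : ℝ), (0 : ℝ)) + t • ((0 : ι → ℝ), (0 : ℝ), (1 : ℝ)) := by
    ext <;> simp [Prod.fst_sum, Prod.snd_sum, Finset.sum_apply, Pi.single_apply]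
  rw [hdecomp, map_add, map_add, map_sum]
  simp only [map_smul, smul_eq_mul, dotProduct]

lemma nonneg_of_forall_le_add_mul {a d e : ℝ} (h : ∀ T : ℝ, 0 ≤ T → e ≤ d + T * a) :
    0 ≤ a := by
  by_contra! ha
  have hT := h ((|d - e| + 1) / -a) (div_nonneg (by positivity) (by linarith))
  rw [div_mul_eq_mul_div, div_neg, mul_div_cancel_right₀ _ ha.ne] at hT
  linarith [le_abs_self (d - e)]

/-- The set `𝒜` of Boyd–Vandenberghe (§5.3) for minimising `πᵀy` over `B` subject to
`π ≥ 0` and `𝟏ᵀπ = 1`. -/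
def achievableSet (B : Set (ι → ℝ)) (y : ι → ℝ) : Set ((ι → ℝ) × ℝ × ℝ) :=
  {x | ∃ π ∈ B, -π ≤ x.1 ∧ ∑ k, π k = x.2.1 ∧ π ⬝ᵥ y ≤ x.2.2}

section achievableSet

variable {B : Set (ι → ℝ)} {y : ι → ℝ}

lemma convex_achievableSet (hB : Convex ℝ B) : Convex ℝ (achievableSet B y) := by
  rintro x ⟨π₁, hB₁, hu₁, hs₁, ht₁⟩ x' ⟨π₂, hB₂, hu₂, hs₂, ht₂⟩ a b ha hb hab
  refine ⟨a • π₁ + b • π₂, hB hB₁ hB₂ ha hb hab, fun k => ?_, ?_, ?_⟩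
  · have := mul_le_mul_of_nonneg_left (hu₁ k) ha
    have := mul_le_mul_of_nonneg_left (hu₂ k) hb
    simp only [Pi.neg_apply, Pi.add_apply, Pi.smul_apply, smul_eq_mul, Prod.fst_add,
      Prod.smul_fst] at *
    linarith
  · simp [Finset.sum_add_distrib, ← Finset.mul_sum, hs₁, hs₂]
  · simp only [add_dotProduct, smul_dotProduct, smul_eq_mul, Prod.snd_add, Prod.smul_snd]
    gcongr

lemma mem_achievableSet {π : ι → ℝ} (hπ : π ∈ B) :
    (-π, ∑ k, π k, π ⬝ᵥ y) ∈ achievableSet B y :=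
  ⟨π, hπ, le_rfl, rfl, le_rfl⟩

lemma add_mem_achievableSet {x : (ι → ℝ) × ℝ × ℝ} (hx : x ∈ achievableSet B y) {du : ι → ℝ}
    {dt : ℝ} (hdu : 0 ≤ du) (hdt : 0 ≤ dt) :
    (x.1 + du, x.2.1, x.2.2 + dt) ∈ achievableSet B y := by
  obtain ⟨π, hπ, hu, hs, ht⟩ := hx
  exact ⟨π, hπ, le_add_of_le_of_nonneg hu hdu, hs, le_add_of_le_of_nonneg ht hdt⟩

lemma mem_interior_achievableSet {π₀ : ι → ℝ} (hπ₀ : ∀ k, 0 < π₀ k) (hπ₀1 : ∑ k, π₀ k = 1)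
    (hB : B ∈ 𝓝 π₀) : (0, 1, π₀ ⬝ᵥ y + 1) ∈ interior (achievableSet B y) := by
  rw [mem_interior_iff_mem_nhds]
  have hB' : ∀ᶠ x : (ι → ℝ) × ℝ × ℝ in 𝓝 (0, 1, π₀ ⬝ᵥ y + 1), x.2.1 • π₀ ∈ B :=
    (Continuous.continuousAt (by fun_prop)).preimage_mem_nhds (by simpa using hB)
  have hu : ∀ᶠ x : (ι → ℝ) × ℝ × ℝ in 𝓝 (0, 1, π₀ ⬝ᵥ y + 1), ∀ k, -(x.2.1 • π₀) k < x.1 k :=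
    eventually_all.2 fun k => ContinuousAt.eventually_lt (by fun_prop) (by fun_prop)
      (by simpa using hπ₀ k)
  have ht : ∀ᶠ x : (ι → ℝ) × ℝ × ℝ in 𝓝 (0, 1, π₀ ⬝ᵥ y + 1), (x.2.1 • π₀) ⬝ᵥ y < x.2.2 :=
    ContinuousAt.eventually_lt (by fun_prop) (by fun_prop) (by simp)
  filter_upwards [hB', hu, ht] with x hxB hxu hxt
  exact ⟨x.2.1 • π₀, hxB, fun k => (hxu k).le, by simp [← Finset.mul_sum, hπ₀1], hxt.le⟩

theorem exists_lagrange_multipliers (hB : Convex ℝ B) {π₀ : ι → ℝ} (hπ₀ : ∀ k, 0 < π₀ k)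
    (hπ₀1 : ∑ k, π₀ k = 1) (hBπ₀ : B ∈ 𝓝 π₀) {v : ℝ}
    (hv : ∀ π ∈ B, 0 ≤ π → ∑ k, π k = 1 → v < π ⬝ᵥ y) :
    ∃ (μ : ℝ) (lam : ι → ℝ), 0 ≤ lam ∧
      ∀ π ∈ B, v ≤ π ⬝ᵥ y - lam ⬝ᵥ π + μ * (∑ k, π k - 1) := by
  classical
  have hA := convex_achievableSet (y := y) hB
  have hv_notMem : ((0 : ι → ℝ), (1 : ℝ), v) ∉ achievableSet B y := by
    rintro ⟨π, hπ, hu, hs, ht⟩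
    exact (hv π hπ (by simpa using hu) hs).not_ge ht
  have hz₀ := mem_interior_achievableSet (y := y) hπ₀ hπ₀1 hBπ₀
  obtain ⟨f, hf⟩ := geometric_hahn_banach_point_open hA.interior isOpen_interior
    (fun h => hv_notMem (interior_subset h))
  have hfA : ∀ x ∈ achievableSet B y, f (0, 1, v) ≤ f x := by
    intro x hx
    refine closure_minimal (fun x hx => (hf x hx).le)
      (isClosed_le continuous_const f.continuous) ?_
    rw [hA.closure_interior_eq_closure_of_nonempty_interior ⟨_, hz₀⟩]
    exact subset_closure hx
  obtain ⟨a, b, c, hfabc⟩ := f.exists_eq_dotProduct_add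
  have hπ₀A := mem_achievableSet (y := y) (mem_of_mem_nhds hBπ₀)
  have ha : 0 ≤ a := fun k =>
    nonneg_of_forall_le_add_mul (d := -(π₀ ⬝ᵥ a) + b + π₀ ⬝ᵥ y * c) (e := b + v * c)
      fun T hT => by
        have := hfA _ (add_mem_achievableSet hπ₀A (du := T • Pi.single k 1) (dt := 0)
          (smul_nonneg hT (Pi.single_nonneg.2 zero_le_one)) le_rfl)
        simp [hfabc, hπ₀1, add_dotProduct, smul_dotProduct, single_dotProduct] at this
        linarith
  have hc : 0 < c := by
    refine lt_of_le_of_ne (nonneg_of_forall_le_add_mul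
      (d := -(π₀ ⬝ᵥ a) + b + π₀ ⬝ᵥ y * c) (e := b + v * c) fun T hT => ?_) fun hc => ?_
    · have := hfA _ (add_mem_achievableSet hπ₀A (du := 0) (dt := T) le_rfl hT)
      simp [hfabc, hπ₀1] at this
      linarith
    -- if `c = 0`, `f` takes the same value at `(0, 1, v)` and at the interior point
    -- `(0, 1, π₀ ⬝ᵥ y + 1)`
    · simpa [hfabc, ← hc] using hf _ hz₀
  refine ⟨b / c, c⁻¹ • a, smul_nonneg (inv_nonneg.2 hc.le) ha, fun π hπ => ?_⟩
  have := hfA _ (mem_achievableSet hπ)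
  simp only [hfabc, neg_dotProduct, zero_dotProduct] at this
  rw [smul_dotProduct, dotProduct_comm a π, smul_eq_mul, ← sub_nonneg]
  have hexpand : (π ⬝ᵥ y - c⁻¹ * (π ⬝ᵥ a) + b / c * (∑ k, π k - 1) - v) * c =
      π ⬝ᵥ y * c - π ⬝ᵥ a + b * (∑ k, π k - 1) - v * c := by
    field_simp
  exact nonneg_of_mul_nonneg_left (by linarith) hc

end achievableSet

def ellipsoid (r : ℝ) (A : Matrix ι ι ℝ) (c : ι → ℝ) : Set (ι → ℝ) :=
  {π | pNorm r (A *ᵥ (π - c)) ≤ 1}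

section ellipsoid

lemma convex_ellipsoid {r : ℝ} (hr : 1 ≤ r) (A : Matrix ι ι ℝ) (c : ι → ℝ) :
    Convex ℝ (ellipsoid r A c) := by
  intro π₁ h₁ π₂ h₂ a b ha hb hab
  have hmap : A *ᵥ (a • π₁ + b • π₂ - c) = a • A *ᵥ (π₁ - c) + b • A *ᵥ (π₂ - c) := by
    rw [← mulVec_smul, ← mulVec_smul, ← mulVec_add]
    congr 1
    linear_combination (norm := module) hab • c
  calc pNorm r (A *ᵥ (a • π₁ + b • π₂ - c))
      ≤ a * pNorm r (A *ᵥ (π₁ - c)) + b * pNorm r (A *ᵥ (π₂ - c)) := by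
        rw [hmap]
        exact (convexOn_pNorm hr).2 trivial trivial ha hb hab
    _ ≤ a * 1 + b * 1 := by gcongr <;> assumption
    _ = 1 := by rw [mul_one, mul_one, hab]

lemma ellipsoid_mem_nhds {r : ℝ} (hr : 0 < r) {A : Matrix ι ι ℝ} {c π₀ : ι → ℝ}
    (h : pNorm r (A *ᵥ (π₀ - c)) < 1) : ellipsoid r A c ∈ 𝓝 π₀ := by
  have hcont : Continuous fun π => pNorm r (A *ᵥ (π - c)) :=
    (continuous_pNorm hr).comp (by fun_prop)
  exact mem_of_superset ((isOpen_lt hcont continuous_const).mem_nhds h)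
    fun _ h => show pNorm r _ ≤ 1 from h.le

variable [DecidableEq ι] {p q : ℝ} {W : Matrix ι ι ℝ} {πnom : ι → ℝ}

lemma inv_mulVec_dotProduct_transpose_mulVec (hW : IsUnit W.det) (v c : ι → ℝ) :
    (W⁻¹ *ᵥ v) ⬝ᵥ (Wᵀ *ᵥ c) = v ⬝ᵥ c := by
  rw [dotProduct_mulVec, vecMul_transpose, mulVec_mulVec, mul_nonsing_inv W hW, one_mulVec]

lemma dotProduct_sub_pNorm_le (hpq : p.HolderConjugate q) (hW : IsUnit W.det) {π : ι → ℝ}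
    (hπ : π ∈ ellipsoid p W⁻¹ πnom) (c : ι → ℝ) :
    πnom ⬝ᵥ c - pNorm q (Wᵀ *ᵥ c) ≤ π ⬝ᵥ c := by
  have h := neg_pNorm_le_dotProduct hpq hπ (Wᵀ *ᵥ c)
  rw [inv_mulVec_dotProduct_transpose_mulVec hW, sub_dotProduct] at h
  linarith

lemma exists_mem_ellipsoid_dotProduct_eq (hpq : p.HolderConjugate q) (hW : IsUnit W.det)
    (c : ι → ℝ) : ∃ π ∈ ellipsoid p W⁻¹ πnom, π ⬝ᵥ c = πnom ⬝ᵥ c - pNorm q (Wᵀ *ᵥ c) := by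
  obtain ⟨z, hz, hzc⟩ := exists_pNorm_le_one_dotProduct_eq hpq (Wᵀ *ᵥ c)
  refine ⟨πnom - W *ᵥ z, ?_, ?_⟩
  · simpa [ellipsoid, mulVec_neg, mulVec_mulVec, nonsing_inv_mul W hW, pNorm_neg] using hz
  · rw [sub_dotProduct, ← hzc, dotProduct_mulVec, vecMul_transpose]

end ellipsoid

lemma dotProduct_fun_const (v : ι → ℝ) (a : ℝ) : v ⬝ᵥ (fun _ => a) = a * ∑ k, v k := by
  simp [dotProduct, Finset.mul_sum, mul_comm]

lemma lagrangian_eq_dotProduct_sub (π y lam : ι → ℝ) (μ : ℝ) :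
    π ⬝ᵥ y - lam ⬝ᵥ π + μ * (∑ k, π k - 1) = π ⬝ᵥ (y - lam + fun _ => μ) - μ := by
  rw [dotProduct_add, dotProduct_sub, dotProduct_comm lam π, dotProduct_fun_const]
  ring

lemma dual_objective_eq [DecidableEq ι] {πnom : ι → ℝ} (hπnom1 : ∑ k, πnom k = 1) (q : ℝ)
    (W : Matrix ι ι ℝ) (y lam : ι → ℝ) (μ : ℝ) :
    πnom ⬝ᵥ (y - lam) - pNorm q (Wᵀ *ᵥ (lam - y - fun _ => μ)) =
      πnom ⬝ᵥ (y - lam + fun _ => μ) - pNorm q (Wᵀ *ᵥ (y - lam + fun _ => μ)) - μ := by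
  have hneg : (lam - y - fun _ => μ) = -(y - lam + fun _ => μ) := by abel
  rw [hneg, mulVec_neg, pNorm_neg, dotProduct_add, dotProduct_fun_const, hπnom1]
  ring

lemma dual_objective_le [DecidableEq ι] {p q : ℝ} (hpq : p.HolderConjugate q)
    {W : Matrix ι ι ℝ} (hW : IsUnit W.det) {πnom : ι → ℝ} (hπnom1 : ∑ k, πnom k = 1)
    (y : ι → ℝ) (μ : ℝ) {lam : ι → ℝ} (hlam : 0 ≤ lam) {π : ι → ℝ}
    (hπ : π ∈ ellipsoid p W⁻¹ πnom) (hπ0 : 0 ≤ π) (hπ1 : ∑ k, π k = 1) :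
    πnom ⬝ᵥ (y - lam) - pNorm q (Wᵀ *ᵥ (lam - y - fun _ => μ)) ≤ π ⬝ᵥ y := by
  have hL := lagrangian_eq_dotProduct_sub π y lam μ
  rw [hπ1, sub_self, mul_zero, add_zero] at hL
  linarith [dotProduct_nonneg_of_nonneg hlam hπ0, dual_objective_eq hπnom1 q W y lam μ,
    dotProduct_sub_pNorm_le hpq hW hπ (y - lam + fun _ => μ)]

theorem ellipsoidal_duality_general (K : ℕ) (p q : ℝ) (hp : 1 < p) (hpq : 1 / p + 1 / q = 1)
    (W : Matrix (Fin K) (Fin K) ℝ) (hW : IsUnit W.det)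
    (πnom : Fin K → ℝ) (hπnom1 : ∑ k, πnom k = 1)
    (slater : ∃ π : Fin K → ℝ, (∀ k, 0 < π k) ∧ ∑ k, π k = 1 ∧
      (∑ k, |(W⁻¹ *ᵥ (π - πnom)) k| ^ p) ^ (1 / p) < 1)
    (y : Fin K → ℝ) :
    sInf {v : ℝ | ∃ π : Fin K → ℝ, (∀ k, 0 ≤ π k) ∧ ∑ k, π k = 1 ∧
        (∑ k, |(W⁻¹ *ᵥ (π - πnom)) k| ^ p) ^ (1 / p) ≤ 1 ∧ v = ∑ k, π k * y k} =
      sSup {v : ℝ | ∃ (μ : ℝ) (lam : Fin K → ℝ), (∀ k, 0 ≤ lam k) ∧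
        v = ∑ k, πnom k * (y k - lam k)
            - (∑ k, |(Wᵀ *ᵥ (lam - y - fun _ => μ)) k| ^ q) ^ (1 / q)} := by
  have hpq' : p.HolderConjugate q := Real.holderConjugate_iff.2 ⟨hp, by simpa using hpq⟩
  obtain ⟨π₀, hπ₀, hπ₀1, hπ₀W⟩ := slater
  have hbdd : BddBelow {v : ℝ | ∃ π : Fin K → ℝ, (∀ k, 0 ≤ π k) ∧ ∑ k, π k = 1 ∧
      (∑ k, |(W⁻¹ *ᵥ (π - πnom)) k| ^ p) ^ (1 / p) ≤ 1 ∧ v = ∑ k, π k * y k} :=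
    ⟨_, by
      rintro _ ⟨π, hπ0, hπ1, hπ, rfl⟩
      exact dual_objective_le hpq' hW hπnom1 y 0 le_rfl hπ hπ0 hπ1⟩
  symm
  refine csSup_eq_of_forall_le_of_forall_lt_exists_gt ⟨_, 0, 0, fun _ => le_rfl, rfl⟩ ?_ ?_
  · rintro _ ⟨μ, lam, hlam, rfl⟩
    refine le_csInf ⟨_, π₀, fun k => (hπ₀ k).le, hπ₀1, hπ₀W.le, rfl⟩ ?_
    rintro _ ⟨π, hπ0, hπ1, hπ, rfl⟩
    exact dual_objective_le hpq' hW hπnom1 y μ hlam hπ hπ0 hπ1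
  · intro w hw
    obtain ⟨v, hwv, hv⟩ := exists_between hw
    obtain ⟨μ, lam, hlam, hL⟩ := exists_lagrange_multipliers (convex_ellipsoid hp.le W⁻¹ πnom)
      hπ₀ hπ₀1 (ellipsoid_mem_nhds hpq'.pos hπ₀W) (y := y)
      fun π hπ hπ0 hπ1 => hv.trans_le (csInf_le hbdd ⟨π, hπ0, hπ1, hπ, rfl⟩)
    obtain ⟨π, hπ, hπc⟩ := exists_mem_ellipsoid_dotProduct_eq (πnom := πnom) hpq' hW
      (y - lam + fun _ => μ)
    refine ⟨_, ⟨μ, lam, hlam, rfl⟩, hwv.trans_le ?_⟩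
    calc v ≤ π ⬝ᵥ y - lam ⬝ᵥ π + μ * (∑ k, π k - 1) := hL π hπ
      _ = πnom ⬝ᵥ (y - lam) - pNorm q (Wᵀ *ᵥ (lam - y - fun _ => μ)) := by
        rw [lagrangian_eq_dotProduct_sub, hπc, dual_objective_eq hπnom1]

/-- Duality for the ellipsoidal distribution set
`Π = {π ∈ S_K : ‖W⁻¹(π − π^nom)‖_p ≤ 1}`, under a Slater condition: for every `y`,
`inf_{π ∈ Π} πᵀ y = sup_{μ ∈ ℝ, λ ≥ 0} ( (π^nom)ᵀ (y − λ) − ‖Wᵀ(λ − y − μ 𝟏)‖_q )`. -/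
theorem ellipsoidal_duality (K : ℕ) (p q : ℝ) (hp : 1 < p) (hpq : 1 / p + 1 / q = 1)
    (W : Matrix (Fin K) (Fin K) ℝ) (hW : IsUnit W.det)
    (πnom : Fin K → ℝ) (hπnom : ∀ k, 0 ≤ πnom k) (hπnom1 : ∑ k, πnom k = 1)
    (slater : ∃ π : Fin K → ℝ, (∀ k, 0 < π k) ∧ ∑ k, π k = 1 ∧
      (∑ k, |(W⁻¹ *ᵥ (π - πnom)) k| ^ p) ^ (1 / p) < 1)
    (y : Fin K → ℝ) :
    sInf {v : ℝ | ∃ π : Fin K → ℝ, (∀ k, 0 ≤ π k) ∧ ∑ k, π k = 1 ∧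
        (∑ k, |(W⁻¹ *ᵥ (π - πnom)) k| ^ p) ^ (1 / p) ≤ 1 ∧ v = ∑ k, π k * y k} =
      sSup {v : ℝ | ∃ (μ : ℝ) (lam : Fin K → ℝ), (∀ k, 0 ≤ lam k) ∧
        v = ∑ k, πnom k * (y k - lam k)
            - (∑ k, |(Wᵀ *ᵥ (lam - y - fun _ => μ)) k| ^ q) ^ (1 / q)} :=
  ellipsoidal_duality_general K p q hp hpq W hW πnom hπnom1 slater y
end

section
/- (Lagrangian dual function for f-divergence constraints.) Let f : [0,∞) → ℝ be a function, and define its conjugate f*(s) = sup_{t ≥ 0} (t·s − f(t)) ∈ ℝ ∪ {+∞}. Let π^nom ∈ ℝ^K with π^nom_i > 0 for all i and 𝟏ᵀπ^nom = 1, let x ∈ ℝ^K, γ ∈ ℝ, and λ > 0. Then sup{ πᵀx − λ·Σ_{i=1}^K π^nom_i f(π_i/π^nom_i) − γ(𝟏ᵀπ − 1) : π ∈ ℝ^K, π ≥ 0 } = Σ_{i=1}^K π^nom_i · λ f*((x_i − γ)/λ) + γ. -/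
/-!
The objective equals `γ + ∑ᵢ (πᵢ (xᵢ - γ) - λ π^nomᵢ f(πᵢ/π^nomᵢ))`, a sum of terms each depending
on a single coordinate `πᵢ ≥ 0`. The supremum of such a separable sum over the product of the
half-lines is the sum of the coordinatewise suprema, and substituting `πᵢ = π^nomᵢ t` turns the
`i`-th supremum into `π^nomᵢ λ f*((xᵢ - γ)/λ)`. In `EReal` the exchange of supremum and sum is
safe because all the functions are real-valued, so no `⊥ + ⊤` ever occurs.
-/

open Finset

/-- The Fenchel conjugate over the nonnegative reals, `f*(s) = sup_{t ≥ 0} (t s − f(t))`,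
with values in the extended reals. -/
noncomputable def fenchelConjNonneg (f : ℝ → ℝ) (s : ℝ) : EReal :=
  ⨆ t : {t : ℝ // 0 ≤ t}, (((t : ℝ) * s - f t : ℝ) : EReal)

namespace EReal

theorem iSup_add_of_ne_bot {ι : Sort*} {g : ι → EReal} {a : EReal} (hg : ⨆ i, g i ≠ ⊥)
    (ha : a ≠ ⊥) : (⨆ i, g i) + a = ⨆ i, (g i + a) := by
  have hcont : ContinuousAt (fun x : EReal => x + a) (⨆ i, g i) :=
    (continuousAt_add (p := (⨆ i, g i, a)) (Or.inr ha) (Or.inl hg)).comp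
      (f := fun x => (x, a)) (by fun_prop)
  exact Monotone.map_iSup_of_continuousAt hcont (fun _ _ h => add_le_add_left h a) (bot_add a)

theorem mul_iSup_of_pos_of_ne_top {ι : Sort*} {c : EReal} (hc : 0 < c) (hc' : c ≠ ⊤)
    (g : ι → EReal) : c * ⨆ i, g i = ⨆ i, c * g i := by
  have hcont : ContinuousAt (fun x : EReal => c * x) (⨆ i, g i) :=
    (continuousAt_mul (p := (c, ⨆ i, g i)) (Or.inl hc.ne') (Or.inl hc.ne') (Or.inl hc.ne_bot)
      (Or.inl hc')).comp (f := fun x => (c, x)) (by fun_prop)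
  exact Monotone.map_iSup_of_continuousAt hcont (fun _ _ h => mul_le_mul_of_nonneg_left h hc.le)
    (mul_bot_of_pos hc)

theorem iSup_coe_ne_bot {ι : Sort*} [Nonempty ι] (g : ι → ℝ) : ⨆ i, (g i : EReal) ≠ ⊥ :=
  let ⟨i⟩ := ‹Nonempty ι›
  ne_bot_of_le_ne_bot (coe_ne_bot (g i)) (le_iSup (fun i => (g i : EReal)) i)

theorem iSup_coe_add_iSup_coe {ι κ : Sort*} [Nonempty ι] [Nonempty κ] (g : ι → ℝ) (h : κ → ℝ) :
    (⨆ i, (g i : EReal)) + ⨆ j, (h j : EReal) = ⨆ i, ⨆ j, ((g i + h j : ℝ) : EReal) := by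
  rw [iSup_add_of_ne_bot (iSup_coe_ne_bot g) (iSup_coe_ne_bot h)]
  refine iSup_congr fun i => ?_
  rw [add_comm, iSup_add_of_ne_bot (iSup_coe_ne_bot h) (coe_ne_bot (g i))]
  exact iSup_congr fun j => by rw [add_comm, coe_add]

theorem iSup_pi_sum_coe {ι : Type*} {τ : ι → Type*} [∀ i, Nonempty (τ i)]
    (g : ∀ i, τ i → ℝ) (s : Finset ι) :
    ⨆ t : ∀ i, τ i, ((∑ i ∈ s, g i (t i) : ℝ) : EReal) = ∑ i ∈ s, ⨆ u, (g i u : EReal) := by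
  classical
  induction s using Finset.induction with
  | empty => simp
  | insert a s ha ih =>
    simp only [sum_insert ha, ← ih]
    rw [iSup_coe_add_iSup_coe]
    apply le_antisymm
    · exact iSup_le fun t => le_iSup_of_le (t a) (le_iSup_of_le t le_rfl)
    · refine iSup₂_le fun u t => le_iSup_of_le (Function.update t a u) (le_of_eq ?_)
      have hs : ∑ i ∈ s, g i (Function.update t a u i) = ∑ i ∈ s, g i (t i) :=
        sum_congr rfl fun i hi => by rw [Function.update_of_ne (ne_of_mem_of_not_mem hi ha)]
      rw [Function.update_self, hs]

end EReal

theorem iSup_sub_perspective_eq_mul_fenchelConjNonneg (f : ℝ → ℝ) {c lam : ℝ} (hc : 0 < c)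
    (hlam : 0 < lam) (y : ℝ) :
    ⨆ p : {p : ℝ // 0 ≤ p}, ((p * y - lam * (c * f (p / c)) : ℝ) : EReal)
      = (c : EReal) * ((lam : EReal) * fenchelConjNonneg f (y / lam)) := by
  rw [← mul_assoc, ← EReal.coe_mul, fenchelConjNonneg,
    EReal.mul_iSup_of_pos_of_ne_top (by exact_mod_cast mul_pos hc hlam) (EReal.coe_ne_top _)]
  apply le_antisymm
  · refine iSup_le fun p => le_iSup_of_le ⟨p / c, div_nonneg p.2 hc.le⟩ (le_of_eq ?_)
    rw [← EReal.coe_mul]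
    congr 1
    field_simp
  · refine iSup_le fun t => le_iSup_of_le ⟨c * t, mul_nonneg hc.le t.2⟩ (le_of_eq ?_)
    rw [← EReal.coe_mul]
    congr 1
    field_simp

theorem f_divergence_dual_general (K : ℕ) (f : ℝ → ℝ)
    (πnom : Fin K → ℝ) (hπnom : ∀ i, 0 < πnom i)
    (x : Fin K → ℝ) (γ : ℝ) (lam : ℝ) (hlam : 0 < lam) :
    (⨆ π : {π : Fin K → ℝ // ∀ i, 0 ≤ π i},
        ((∑ i, (π : Fin K → ℝ) i * x i
          - lam * ∑ i, πnom i * f ((π : Fin K → ℝ) i / πnom i)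
          - γ * ((∑ i, (π : Fin K → ℝ) i) - 1) : ℝ) : EReal)) =
      (∑ i, (πnom i : EReal) * ((lam : EReal) * fenchelConjNonneg f ((x i - γ) / lam)))
        + (γ : EReal) := by
  simp only [← iSup_sub_perspective_eq_mul_fenchelConjNonneg f (hπnom _) hlam]
  rw [← EReal.iSup_pi_sum_coe (τ := fun _ => {p : ℝ // 0 ≤ p}),
    EReal.iSup_add_of_ne_bot (EReal.iSup_coe_ne_bot _) (EReal.coe_ne_bot γ),
    ← Equiv.subtypePiEquivPi.iSup_comp]
  refine iSup_congr fun π => ?_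
  rw [← EReal.coe_add]
  congr 1
  dsimp only [Equiv.subtypePiEquivPi, Equiv.coe_fn_mk]
  simp only [mul_sub, sum_sub_distrib, ← mul_sum, ← sum_mul]
  ring

/-- Lagrangian dual function for `f`-divergence constraints:
`sup_{π ≥ 0} ( πᵀ x − λ Σᵢ π^nomᵢ f(πᵢ/π^nomᵢ) − γ(𝟏ᵀπ − 1) )
  = Σᵢ π^nomᵢ · λ f*((xᵢ − γ)/λ) + γ`, in the extended reals. -/
theorem f_divergence_dual (K : ℕ) (f : ℝ → ℝ)
    (πnom : Fin K → ℝ) (hπnom : ∀ i, 0 < πnom i) (hπnom1 : ∑ i, πnom i = 1)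
    (x : Fin K → ℝ) (γ : ℝ) (lam : ℝ) (hlam : 0 < lam) :
    (⨆ π : {π : Fin K → ℝ // ∀ i, 0 ≤ π i},
        ((∑ i, (π : Fin K → ℝ) i * x i
          - lam * ∑ i, πnom i * f ((π : Fin K → ℝ) i / πnom i)
          - γ * ((∑ i, (π : Fin K → ℝ) i) - 1) : ℝ) : EReal)) =
      (∑ i, (πnom i : EReal) * ((lam : EReal) * fenchelConjNonneg f ((x i - γ) / lam)))
        + (γ : EReal) :=
  f_divergence_dual_general K f πnom hπnom x γ lam hlam
end

section
/- (Conjugate of the α-divergence generator.) Let α > 1 and define f_α : [0,∞) → ℝ by f_α(t) = (t^α − 1 − α(t − 1))/(α(α − 1)). Then f_α(1) = 0, f_α is convex on [0,∞), and for every s ∈ ℝ with 1 + (α − 1)s > 0, sup_{t ≥ 0} (t·s − f_α(t)) = (1/α)·((1 + (α − 1)s)^{α/(α−1)} − 1). -/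
/-!
Convexity is that of `t ↦ t ^ α` minus an affine function. For the conjugate put
`u = 1 + (α - 1) s > 0` and `q = α / (α - 1)`, the exponent conjugate to `α`. Then
`t s - f_α(t)` equals `(u ^ q - 1) / α` minus `(t ^ α + (α - 1) u ^ q - α t u) / (α (α - 1))`,
and the last numerator is `α (t ^ α / α + u ^ q / q - t u) ≥ 0` by Young's inequality, with equality
at `t = u ^ (1 / (α - 1))`, where `t ^ α = t u = u ^ q`.
-/

open Real Set

noncomputable def alphaDivGenerator (α t : ℝ) : ℝ :=
  (t ^ α - 1 - α * (t - 1)) / (α * (α - 1))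

theorem alphaDivGenerator_one (α : ℝ) : alphaDivGenerator α 1 = 0 := by
  simp [alphaDivGenerator]

theorem convexOn_alphaDivGenerator {α : ℝ} (hα : 1 < α) :
    ConvexOn ℝ (Ici 0) (alphaDivGenerator α) := by
  have hc : 0 ≤ (α * (α - 1))⁻¹ := inv_nonneg.2 (mul_pos (by linarith) (by linarith)).le
  have hAffine : ConcaveOn ℝ (Ici (0 : ℝ)) fun t => α • id t + (1 - α) :=
    ((concaveOn_id (convex_Ici 0)).smul (by linarith)).add_const _
  refine (((convexOn_rpow hα.le).sub hAffine).smul hc).congr fun t _ => ?_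
  simp only [alphaDivGenerator, Pi.sub_apply, id, smul_eq_mul]
  ring

section Conjugate

variable {α : ℝ}

theorem mul_sub_alphaDivGenerator_eq (hα₀ : α ≠ 0) (hα₁ : α ≠ 1) (s t : ℝ) :
    t * s - alphaDivGenerator α t =
      1 / α * ((1 + (α - 1) * s) ^ (α / (α - 1)) - 1) -
        (t ^ α + (α - 1) * (1 + (α - 1) * s) ^ (α / (α - 1)) - α * (t * (1 + (α - 1) * s))) /
          (α * (α - 1)) := by
  have : α - 1 ≠ 0 := sub_ne_zero.2 hα₁
  simp only [alphaDivGenerator]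
  field_simp
  ring

theorem young_gap_nonneg (hα : 1 < α) {t u : ℝ} (ht : 0 ≤ t) (hu : 0 ≤ u) :
    0 ≤ t ^ α + (α - 1) * u ^ (α / (α - 1)) - α * (t * u) := by
  have hYoung := young_inequality_of_nonneg ht hu (HolderConjugate.conjExponent hα)
  rw [conjExponent, div_div_eq_mul_div, div_add_div _ _ (by linarith) (by linarith),
    le_div_iff₀ (by nlinarith)] at hYoung
  nlinarith

theorem young_gap_rpow_inv_sub_one_eq_zero (hα₁ : α ≠ 1) {u : ℝ} (hu : 0 < u) :
    (u ^ (α - 1)⁻¹) ^ α + (α - 1) * u ^ (α / (α - 1)) - α * (u ^ (α - 1)⁻¹ * u) = 0 := by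
  have : α - 1 ≠ 0 := sub_ne_zero.2 hα₁
  have hPow : (u ^ (α - 1)⁻¹) ^ α = u ^ (α / (α - 1)) := by
    rw [← rpow_mul hu.le, inv_mul_eq_div]
  have hMul : u ^ (α - 1)⁻¹ * u = u ^ (α / (α - 1)) := by
    rw [← rpow_add_one hu.ne']
    congr 1
    field_simp
    ring
  rw [hPow, hMul]
  ring

theorem isGreatest_mul_sub_alphaDivGenerator (hα : 1 < α) {s : ℝ} (hs : 0 < 1 + (α - 1) * s) :
    IsGreatest {v | ∃ t : ℝ, 0 ≤ t ∧ v = t * s - alphaDivGenerator α t}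
      (1 / α * ((1 + (α - 1) * s) ^ (α / (α - 1)) - 1)) := by
  have hc : 0 < α * (α - 1) := mul_pos (by linarith) (by linarith)
  have hα₀ : α ≠ 0 := by linarith
  refine ⟨⟨(1 + (α - 1) * s) ^ (α - 1)⁻¹, rpow_nonneg hs.le _, ?_⟩, ?_⟩
  · rw [mul_sub_alphaDivGenerator_eq hα₀ hα.ne', young_gap_rpow_inv_sub_one_eq_zero hα.ne' hs]
    ring
  · rintro v ⟨t, ht, rfl⟩
    rw [mul_sub_alphaDivGenerator_eq hα₀ hα.ne', sub_le_self_iff]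
    exact div_nonneg (young_gap_nonneg hα ht hs.le) hc.le

end Conjugate

/-- Conjugate of the α-divergence generator, for `α > 1`:
`f_α(t) = (t^α − 1 − α(t − 1))/(α(α − 1))` satisfies `f_α(1) = 0`, is convex on `[0,∞)`,
and for every `s` with `1 + (α − 1)s > 0`,
`sup_{t ≥ 0} (t s − f_α(t)) = (1/α)((1 + (α − 1)s)^{α/(α−1)} − 1)`. -/
theorem alpha_divergence_conjugate (α : ℝ) (hα : 1 < α) :
    (fun t : ℝ => (t ^ α - 1 - α * (t - 1)) / (α * (α - 1))) 1 = 0 ∧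
    ConvexOn ℝ (Set.Ici (0 : ℝ))
      (fun t : ℝ => (t ^ α - 1 - α * (t - 1)) / (α * (α - 1))) ∧
    (∀ s : ℝ, 0 < 1 + (α - 1) * s →
      sSup {v : ℝ | ∃ t : ℝ, 0 ≤ t ∧
          v = t * s - (t ^ α - 1 - α * (t - 1)) / (α * (α - 1))} =
        (1 / α) * ((1 + (α - 1) * s) ^ (α / (α - 1)) - 1)) :=
  ⟨alphaDivGenerator_one α, convexOn_alphaDivGenerator hα,
    fun _ hs => (isGreatest_mul_sub_alphaDivGenerator hα hs).csSup_eq⟩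
end

section
/- (Strong duality for the Wasserstein distribution set.) Let c ∈ ℝ^{K×K} with c_{ij} ≥ 0 for all i, j and c_{jj} = 0 for all j, and for π, π^nom ∈ S_K define the Wasserstein distance D_c(π, π^nom) = min{ Σ_{i,j} Q_{ij} c_{ij} : Q ∈ ℝ^{K×K}, Q ≥ 0, Q𝟏 = π, Qᵀ𝟏 = π^nom }. Let π^nom ∈ S_K, s > 0, and Π = {π ∈ S_K : D_c(π, π^nom) ≤ s}. Then for every x ∈ ℝ^K, inf_{π ∈ Π} πᵀ x = sup_{λ ≥ 0} ( Σ_{j=1}^K π^nom_j · min_{1 ≤ i ≤ K} (x_i + λ c_{ij}) − s·λ ). -/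
open Finset

/-- The Wasserstein (optimal transport) distance between two distributions on `K` points,
with cost matrix `c`: the minimum of `Σᵢⱼ Qᵢⱼ cᵢⱼ` over transport plans `Q ≥ 0` with
row sums `π` and column sums `πnom`. -/
noncomputable def wassersteinDist (K : ℕ) (c : Matrix (Fin K) (Fin K) ℝ)
    (π πnom : Fin K → ℝ) : ℝ :=
  sInf {v : ℝ | ∃ Q : Matrix (Fin K) (Fin K) ℝ, (∀ i j, 0 ≤ Q i j) ∧
    (∀ i, ∑ j, Q i j = π i) ∧ (∀ j, ∑ i, Q i j = πnom j) ∧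
    v = ∑ i, ∑ j, Q i j * c i j}

open Pointwise

section Aux

variable {K : ℕ}

lemma fin_iInf_exists [Nonempty (Fin K)] (f : Fin K → ℝ) :
    ∃ i0 : Fin K, (⨅ i, f i) = f i0 ∧ ∀ i, f i0 ≤ f i := by
  obtain ⟨i0, h⟩ := Finite.exists_min f
  exact ⟨i0, le_antisymm (ciInf_le (Finite.bddBelow_range f) i0) (le_ciInf h), h⟩

lemma fin_iInf_le [Nonempty (Fin K)] (f : Fin K → ℝ) (i : Fin K) : (⨅ i, f i) ≤ f i :=
  ciInf_le (Finite.bddBelow_range f) i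

lemma sum_split (Q : Fin K → Fin K → ℝ) (c : Matrix (Fin K) (Fin K) ℝ)
    (x : Fin K → ℝ) (lam : ℝ) :
    ∑ i, ∑ j, Q i j * (x i + lam * c i j)
      = (∑ i, ∑ j, Q i j * x i) + lam * (∑ i, ∑ j, Q i j * c i j) := by
  rw [Finset.mul_sum, ← Finset.sum_add_distrib]
  refine Finset.sum_congr rfl fun i _ => ?_
  rw [Finset.mul_sum, ← Finset.sum_add_distrib]
  refine Finset.sum_congr rfl fun j _ => ?_
  ring

lemma plan_lower [Nonempty (Fin K)] (πnom : Fin K → ℝ) (Q : Fin K → Fin K → ℝ)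
    (h0 : ∀ i j, 0 ≤ Q i j) (hcol : ∀ j, ∑ i, Q i j = πnom j) (y : Fin K → Fin K → ℝ) :
    ∑ j, πnom j * (⨅ i, y i j) ≤ ∑ i, ∑ j, Q i j * y i j := by
  rw [Finset.sum_comm]
  refine Finset.sum_le_sum fun j _ => ?_
  rw [← hcol j, Finset.sum_mul]
  exact Finset.sum_le_sum fun i _ =>
    mul_le_mul_of_nonneg_left (fin_iInf_le (fun i' => y i' j) i) (h0 i j)

lemma plan_attain [Nonempty (Fin K)] (πnom : Fin K → ℝ) (hπ : ∀ k, 0 ≤ πnom k)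
    (y : Fin K → Fin K → ℝ) :
    ∃ Q : Fin K → Fin K → ℝ, (∀ i j, 0 ≤ Q i j) ∧ (∀ j, ∑ i, Q i j = πnom j) ∧
      ∑ i, ∑ j, Q i j * y i j = ∑ j, πnom j * (⨅ i, y i j) := by
  classical
  choose sel hsel _ using fun j => fin_iInf_exists (fun i => y i j)
  refine ⟨fun i j => if i = sel j then πnom j else 0, ?_, ?_, ?_⟩
  · intro i j; dsimp only; split
    · exact hπ j
    · exact le_refl 0
  · intro j; simp [Finset.sum_ite_eq']
  · rw [Finset.sum_comm]
    refine Finset.sum_congr rfl fun j _ => ?_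
    rw [hsel j]
    simp [ite_mul, Finset.sum_ite_eq']

noncomputable def phiL (c : Matrix (Fin K) (Fin K) ℝ) (x : Fin K → ℝ) :
    (Fin K → Fin K → ℝ) →ₗ[ℝ] ℝ × ℝ where
  toFun Q := (∑ i, ∑ j, Q i j * c i j, ∑ i, ∑ j, Q i j * x i)
  map_add' Q R := by
    simp only [Pi.add_apply, add_mul, Finset.sum_add_distrib, Prod.mk_add_mk]
  map_smul' r Q := by
    simp only [Pi.smul_apply, smul_eq_mul, RingHom.id_apply, Prod.smul_mk,
      Finset.mul_sum, mul_assoc]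

lemma setD_convex (πnom : Fin K → ℝ) :
    Convex ℝ {Q : Fin K → Fin K → ℝ | (∀ i j, 0 ≤ Q i j) ∧ ∀ j, ∑ i, Q i j = πnom j} := by
  rintro Q ⟨hQ0, hQc⟩ R ⟨hR0, hRc⟩ a b ha hb hab
  refine ⟨fun i j => ?_, fun j => ?_⟩
  · have : (a • Q + b • R) i j = a * Q i j + b * R i j := rfl
    rw [this]
    exact add_nonneg (mul_nonneg ha (hQ0 i j)) (mul_nonneg hb (hR0 i j))
  · have : ∀ i, (a • Q + b • R) i j = a * Q i j + b * R i j := fun i => rfl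
    simp only [this, Finset.sum_add_distrib, ← Finset.mul_sum, hQc j, hRc j]
    linear_combination πnom j * hab

lemma setD_compact (πnom : Fin K → ℝ) (hπ : ∀ k, 0 ≤ πnom k) (hπ1 : ∑ k, πnom k = 1) :
    IsCompact {Q : Fin K → Fin K → ℝ | (∀ i j, 0 ≤ Q i j) ∧ ∀ j, ∑ i, Q i j = πnom j} := by
  have hclosed : IsClosed {Q : Fin K → Fin K → ℝ | (∀ i j, 0 ≤ Q i j) ∧ ∀ j, ∑ i, Q i j = πnom j} := by
    have h1 : IsClosed {Q : Fin K → Fin K → ℝ | ∀ i j, 0 ≤ Q i j} := by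
      have : {Q : Fin K → Fin K → ℝ | ∀ i j, 0 ≤ Q i j}
          = ⋂ i, ⋂ j, {Q : Fin K → Fin K → ℝ | 0 ≤ Q i j} := by
        ext Q; simp
      rw [this]
      exact isClosed_iInter fun i => isClosed_iInter fun j =>
        isClosed_le continuous_const ((continuous_apply j).comp (continuous_apply i))
    have h2 : IsClosed {Q : Fin K → Fin K → ℝ | ∀ j, ∑ i, Q i j = πnom j} := by
      have : {Q : Fin K → Fin K → ℝ | ∀ j, ∑ i, Q i j = πnom j}
          = ⋂ j, {Q : Fin K → Fin K → ℝ | ∑ i, Q i j = πnom j} := by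
        ext Q; simp
      rw [this]
      exact isClosed_iInter fun j => isClosed_eq
        (continuous_finset_sum _ fun i _ => (continuous_apply j).comp (continuous_apply i))
        continuous_const
    exact h1.inter h2
  have hbox : IsCompact (Set.pi Set.univ fun _ : Fin K =>
      (Set.pi Set.univ fun _ : Fin K => Set.Icc (0:ℝ) 1)) :=
    isCompact_univ_pi fun _ => isCompact_univ_pi fun _ => isCompact_Icc
  refine IsCompact.of_isClosed_subset hbox hclosed ?_
  rintro Q ⟨hQ0, hQc⟩
  refine Set.mem_univ_pi.2 fun i => Set.mem_univ_pi.2 fun j => ?_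
  refine ⟨hQ0 i j, ?_⟩
  calc Q i j ≤ ∑ i', Q i' j := Finset.single_le_sum (fun i' _ => hQ0 i' j) (Finset.mem_univ i)
  _ = πnom j := hQc j
  _ ≤ ∑ k, πnom k := Finset.single_le_sum (fun k _ => hπ k) (Finset.mem_univ j)
  _ = 1 := hπ1

lemma exists_dual_lam [Nonempty (Fin K)] (c : Matrix (Fin K) (Fin K) ℝ)
    (hc : ∀ i j, 0 ≤ c i j) (hcdiag : ∀ j, c j j = 0)
    (πnom : Fin K → ℝ) (hπnom : ∀ k, 0 ≤ πnom k) (hπnom1 : ∑ k, πnom k = 1)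
    (s : ℝ) (hs : 0 < s) (x : Fin K → ℝ) (p ε : ℝ) (hε : 0 < ε)
    (hnomem : ∀ Q : Fin K → Fin K → ℝ, (∀ i j, 0 ≤ Q i j) → (∀ j, ∑ i, Q i j = πnom j) →
      (∑ i, ∑ j, Q i j * c i j ≤ s) → (∑ i, ∑ j, Q i j * x i ≤ p - ε) → False) :
    ∃ lam : ℝ, 0 ≤ lam ∧
      p - ε < (∑ j, πnom j * ⨅ i : Fin K, (x i + lam * c i j)) - s * lam := by
  classical
  set SetD : Set (Fin K → Fin K → ℝ) :=
    {Q | (∀ i j, 0 ≤ Q i j) ∧ ∀ j, ∑ i, Q i j = πnom j} with hSetD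
  set quad : Set (ℝ × ℝ) := {q | 0 ≤ q.1 ∧ 0 ≤ q.2} with hquad
  have hquadclosed : IsClosed quad := by
    have : quad = {q : ℝ × ℝ | 0 ≤ q.1} ∩ {q : ℝ × ℝ | 0 ≤ q.2} := rfl
    rw [this]
    exact (isClosed_le continuous_const continuous_fst).inter
      (isClosed_le continuous_const continuous_snd)
  have hquadconvex : Convex ℝ quad := by
    rintro q ⟨hq1, hq2⟩ r ⟨hr1, hr2⟩ a b ha hb _
    constructor
    · simp only [Prod.fst_add, Prod.smul_fst, smul_eq_mul]
      exact add_nonneg (mul_nonneg ha hq1) (mul_nonneg hb hr1)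
    · simp only [Prod.snd_add, Prod.smul_snd, smul_eq_mul]
      exact add_nonneg (mul_nonneg ha hq2) (mul_nonneg hb hr2)
  set A : Set (ℝ × ℝ) := (phiL c x) '' SetD + quad with hA
  have hAclosed : IsClosed A := by
    apply IsClosed.add_left_of_isCompact hquadclosed
    exact ((setD_compact πnom hπnom hπnom1).image (phiL c x).continuous_of_finiteDimensional)
  have hAconvex : Convex ℝ A :=
    ((setD_convex πnom).linear_image (phiL c x)).add hquadconvex
  set z : ℝ × ℝ := (s, p - ε) with hz
  have hzA : z ∉ A := by
    intro hmem
    rw [hA, Set.mem_add] at hmem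
    obtain ⟨a, ha, b, hb, hab⟩ := hmem
    obtain ⟨Q, hQ, rfl⟩ := ha
    have h1 : ((phiL c x) Q).1 + b.1 = s := by
      have := congrArg Prod.fst hab; simpa [hz] using this
    have h2 : ((phiL c x) Q).2 + b.2 = p - ε := by
      have := congrArg Prod.snd hab; simpa [hz] using this
    have hc1 : ((phiL c x) Q).1 = ∑ i, ∑ j, Q i j * c i j := rfl
    have hc2 : ((phiL c x) Q).2 = ∑ i, ∑ j, Q i j * x i := rfl
    exact hnomem Q hQ.1 hQ.2 (by rw [← hc1]; linarith [hb.1])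
      (by rw [← hc2]; linarith [hb.2])
  obtain ⟨f, u, hfA, hfz⟩ := geometric_hahn_banach_closed_point hAconvex hAclosed hzA
  set α : ℝ := f (1, 0) with hαdef
  set β : ℝ := f (0, 1) with hβdef
  have hfeval : ∀ q : ℝ × ℝ, f q = q.1 * α + q.2 * β := by
    intro q
    have hq : q = q.1 • ((1:ℝ), (0:ℝ)) + q.2 • ((0:ℝ), (1:ℝ)) := by
      simp [Prod.ext_iff]
    calc f q = f (q.1 • ((1:ℝ), (0:ℝ)) + q.2 • ((0:ℝ), (1:ℝ))) := by rw [← hq]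
    _ = q.1 * α + q.2 * β := by
        rw [map_add, map_smul, map_smul, smul_eq_mul, smul_eq_mul, hαdef, hβdef]
  set Q0 : Fin K → Fin K → ℝ := fun i j => if i = j then πnom j else 0 with hQ0def
  have hQ0D : Q0 ∈ SetD := by
    constructor
    · intro i j
      by_cases h : i = j
      · simp only [hQ0def, if_pos h]; exact hπnom j
      · simp only [hQ0def, if_neg h]; exact le_refl 0
    · intro j; simp [hQ0def, Finset.sum_ite_eq']
  have hmemA : ∀ Q ∈ SetD, ∀ b : ℝ × ℝ, 0 ≤ b.1 → 0 ≤ b.2 → (phiL c x) Q + b ∈ A := by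
    intro Q hQ b hb1 hb2
    exact Set.add_mem_add (Set.mem_image_of_mem _ hQ) ⟨hb1, hb2⟩
  have hβle : β ≤ 0 := by
    by_contra hcon
    push_neg at hcon
    set t : ℝ := max 1 ((u - f ((phiL c x) Q0)) / β + 1) with ht
    have ht0 : (0:ℝ) ≤ t := le_trans zero_le_one (le_max_left _ _)
    have hval := hfA _ (hmemA Q0 hQ0D (0, t) (le_refl 0) ht0)
    rw [map_add, hfeval (0, t)] at hval
    norm_num at hval
    have htβ : (u - f ((phiL c x) Q0)) / β * β + β ≤ t * β := by
      have h5 : (u - f ((phiL c x) Q0)) / β + 1 ≤ t := le_max_right _ _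
      nlinarith
    rw [div_mul_cancel₀ _ (ne_of_gt hcon)] at htβ
    linarith
  have hαle : α ≤ 0 := by
    by_contra hcon
    push_neg at hcon
    set t : ℝ := max 1 ((u - f ((phiL c x) Q0)) / α + 1) with ht
    have ht0 : (0:ℝ) ≤ t := le_trans zero_le_one (le_max_left _ _)
    have hval := hfA _ (hmemA Q0 hQ0D (t, 0) ht0 (le_refl 0))
    rw [map_add, hfeval (t, 0)] at hval
    norm_num at hval
    have htα : (u - f ((phiL c x) Q0)) / α * α + α ≤ t * α := by
      have h5 : (u - f ((phiL c x) Q0)) / α + 1 ≤ t := le_max_right _ _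
      nlinarith
    rw [div_mul_cancel₀ _ (ne_of_gt hcon)] at htα
    linarith
  have hcost0 : ((phiL c x) Q0).1 = 0 := by
    have h4 : ((phiL c x) Q0).1 = ∑ i, ∑ j, Q0 i j * c i j := rfl
    rw [h4]
    refine Finset.sum_eq_zero fun i _ => ?_
    have h5 : ∀ j, Q0 i j * c i j = if i = j then πnom j * c i j else 0 := by
      intro j
      by_cases h : i = j
      · simp only [hQ0def, if_pos h]
      · simp only [hQ0def, if_neg h, zero_mul]
    simp only [h5, Finset.sum_ite_eq, Finset.mem_univ, if_true, hcdiag i, mul_zero]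
  have hβlt : β < 0 := by
    rcases lt_or_eq_of_le hβle with h | h
    · exact h
    · exfalso
      have hfQ0 : f ((phiL c x) Q0) < u := by
        have := hfA _ (hmemA Q0 hQ0D 0 (le_refl 0) (le_refl 0))
        rwa [add_zero] at this
      rw [hfeval, hcost0, zero_mul, zero_add, h, mul_zero] at hfQ0
      rw [hfeval] at hfz
      simp only [hz, h, mul_zero, add_zero] at hfz
      nlinarith [mul_nonneg (le_of_lt hs) (neg_nonneg.mpr hαle)]
  refine ⟨α / β, ?_, ?_⟩
  · rw [← neg_div_neg_eq]
    exact div_nonneg (by linarith) (by linarith)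
  set lam : ℝ := α / β with hlamdef
  have hαeq : α = lam * β := by
    rw [hlamdef, div_mul_cancel₀ _ (ne_of_lt hβlt)]
  have key : ∀ Q ∈ SetD,
      lam * s + (p - ε) < lam * (∑ i, ∑ j, Q i j * c i j) + ∑ i, ∑ j, Q i j * x i := by
    intro Q hQ
    have h1 : f ((phiL c x) Q) < u := by
      have := hfA _ (hmemA Q hQ 0 (le_refl 0) (le_refl 0))
      rwa [add_zero] at this
    have h2 := h1.trans hfz
    rw [hfeval, hfeval] at h2
    have hc1 : ((phiL c x) Q).1 = ∑ i, ∑ j, Q i j * c i j := rfl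
    have hc2 : ((phiL c x) Q).2 = ∑ i, ∑ j, Q i j * x i := rfl
    rw [hc1, hc2, hαeq] at h2
    simp only [hz] at h2
    set C : ℝ := ∑ i, ∑ j, Q i j * c i j
    set V : ℝ := ∑ i, ∑ j, Q i j * x i
    have h3 : (-β) * (lam * s + (p - ε)) < (-β) * (lam * C + V) := by nlinarith
    exact lt_of_mul_lt_mul_left h3 (by linarith)
  obtain ⟨Qs, hQs0, hQscol, hQsval⟩ :=
    plan_attain πnom hπnom (fun i j => x i + lam * c i j)
  have hsplit := sum_split Qs c x lam
  have hkey := key Qs ⟨hQs0, hQscol⟩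
  rw [hsplit] at hQsval
  linarith

end Aux

section Aux2

variable {K : ℕ}

lemma wassersteinSet_bddBelow (c : Matrix (Fin K) (Fin K) ℝ) (hc : ∀ i j, 0 ≤ c i j)
    (π πnom : Fin K → ℝ) :
    BddBelow {v : ℝ | ∃ Q : Matrix (Fin K) (Fin K) ℝ, (∀ i j, 0 ≤ Q i j) ∧
      (∀ i, ∑ j, Q i j = π i) ∧ (∀ j, ∑ i, Q i j = πnom j) ∧
      v = ∑ i, ∑ j, Q i j * c i j} := by
  refine ⟨0, ?_⟩
  rintro v ⟨Q, h0, _, _, rfl⟩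
  exact Finset.sum_nonneg fun i _ => Finset.sum_nonneg fun j _ =>
    mul_nonneg (h0 i j) (hc i j)

lemma wasserstein_le (c : Matrix (Fin K) (Fin K) ℝ) (hc : ∀ i j, 0 ≤ c i j)
    (π πnom : Fin K → ℝ) (Q : Matrix (Fin K) (Fin K) ℝ) (h0 : ∀ i j, 0 ≤ Q i j)
    (hrow : ∀ i, ∑ j, Q i j = π i) (hcol : ∀ j, ∑ i, Q i j = πnom j) :
    wassersteinDist K c π πnom ≤ ∑ i, ∑ j, Q i j * c i j :=
  csInf_le (wassersteinSet_bddBelow c hc π πnom) ⟨Q, h0, hrow, hcol, rfl⟩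

lemma wasserstein_exists_lt (c : Matrix (Fin K) (Fin K) ℝ)
    (π πnom : Fin K → ℝ) (hπ0 : ∀ k, 0 ≤ π k) (hπ1 : ∑ k, π k = 1)
    (hπnom0 : ∀ k, 0 ≤ πnom k) (hπnom1 : ∑ k, πnom k = 1) (t : ℝ) (hlt : wassersteinDist K c π πnom < t) :
    ∃ Q : Matrix (Fin K) (Fin K) ℝ, (∀ i j, 0 ≤ Q i j) ∧
      (∀ i, ∑ j, Q i j = π i) ∧ (∀ j, ∑ i, Q i j = πnom j) ∧
      ∑ i, ∑ j, Q i j * c i j < t := by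
  have hne : {v : ℝ | ∃ Q : Matrix (Fin K) (Fin K) ℝ, (∀ i j, 0 ≤ Q i j) ∧
      (∀ i, ∑ j, Q i j = π i) ∧ (∀ j, ∑ i, Q i j = πnom j) ∧
      v = ∑ i, ∑ j, Q i j * c i j}.Nonempty := by
    refine ⟨_, (fun i j => π i * πnom j : Matrix (Fin K) (Fin K) ℝ), ?_, ?_, ?_, rfl⟩
    · intro i j; exact mul_nonneg (hπ0 i) (hπnom0 j)
    · intro i; rw [← Finset.mul_sum, hπnom1, mul_one]
    · intro j; rw [← Finset.sum_mul, hπ1, one_mul]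
  obtain ⟨v, ⟨Q, h0, hrow, hcol, rfl⟩, hvt⟩ := exists_lt_of_csInf_lt hne hlt
  exact ⟨Q, h0, hrow, hcol, hvt⟩

end Aux2

section Aux3

variable {K : ℕ}

lemma weak_duality [Nonempty (Fin K)] (c : Matrix (Fin K) (Fin K) ℝ)
    (hc : ∀ i j, 0 ≤ c i j) (πnom : Fin K → ℝ)
    (hπnom : ∀ k, 0 ≤ πnom k) (hπnom1 : ∑ k, πnom k = 1)
    (s : ℝ) (x : Fin K → ℝ) (lam : ℝ) (hlam : 0 ≤ lam)
    (π : Fin K → ℝ) (hπ0 : ∀ k, 0 ≤ π k) (hπ1 : ∑ k, π k = 1)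
    (hW : wassersteinDist K c π πnom ≤ s) :
    (∑ j, πnom j * ⨅ i : Fin K, (x i + lam * c i j)) - s * lam ≤ ∑ k, π k * x k := by
  refine le_of_forall_sub_le fun ε hε => ?_
  have hlam1 : (0:ℝ) < lam + 1 := by linarith
  set ε' : ℝ := ε / (lam + 1) with hε'def
  have hε' : 0 < ε' := div_pos hε hlam1
  obtain ⟨Q, h0, hrow, hcol, hcost⟩ := wasserstein_exists_lt c π πnom hπ0 hπ1 hπnom hπnom1
    (s + ε') (lt_of_le_of_lt hW (by linarith))
  have hlow := plan_lower πnom (fun i j => Q i j) h0 hcol (fun i j => x i + lam * c i j)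
  have hsplit := sum_split (fun i j => Q i j) c x lam
  rw [hsplit] at hlow
  have hval : ∑ i, ∑ j, Q i j * x i = ∑ k, π k * x k := by
    refine Finset.sum_congr rfl fun i _ => ?_
    rw [← Finset.sum_mul, hrow i]
  have hcl : lam * (∑ i, ∑ j, Q i j * c i j) ≤ lam * (s + ε') :=
    mul_le_mul_of_nonneg_left (le_of_lt hcost) hlam
  have hlε : lam * ε' ≤ ε := by
    rw [hε'def, mul_div_assoc']
    rw [div_le_iff₀ hlam1]
    nlinarith
  linarith

end Aux3

/-- Strong duality for the Wasserstein distribution set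
`Π = {π ∈ S_K : D_c(π, π^nom) ≤ s}`: for every `x`,
`inf_{π ∈ Π} πᵀ x = sup_{λ ≥ 0} ( Σⱼ π^nomⱼ minᵢ (xᵢ + λ cᵢⱼ) − s λ )`. -/
theorem wasserstein_strong_duality (K : ℕ) (c : Matrix (Fin K) (Fin K) ℝ)
    (hc : ∀ i j, 0 ≤ c i j) (hcdiag : ∀ j, c j j = 0)
    (πnom : Fin K → ℝ) (hπnom : ∀ k, 0 ≤ πnom k) (hπnom1 : ∑ k, πnom k = 1)
    (s : ℝ) (hs : 0 < s) (x : Fin K → ℝ) :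
    sInf {v : ℝ | ∃ π : Fin K → ℝ, (∀ k, 0 ≤ π k) ∧ ∑ k, π k = 1 ∧
        wassersteinDist K c π πnom ≤ s ∧ v = ∑ k, π k * x k} =
      sSup {v : ℝ | ∃ lam : ℝ, 0 ≤ lam ∧
        v = (∑ j, πnom j * ⨅ i : Fin K, (x i + lam * c i j)) - s * lam} := by
  classical
  have hKne : Nonempty (Fin K) := by
    rcases Nat.eq_zero_or_pos K with h | h
    · exfalso; subst h; simp at hπnom1
    · exact Fin.pos_iff_nonempty.mp h
  set P : Set ℝ := {v : ℝ | ∃ π : Fin K → ℝ, (∀ k, 0 ≤ π k) ∧ ∑ k, π k = 1 ∧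
      wassersteinDist K c π πnom ≤ s ∧ v = ∑ k, π k * x k} with hPdef
  set Dl : Set ℝ := {v : ℝ | ∃ lam : ℝ, 0 ≤ lam ∧
      v = (∑ j, πnom j * ⨅ i : Fin K, (x i + lam * c i j)) - s * lam} with hDdef
  -- the diagonal plan shows πnom itself is primal-feasible
  have hWnom : wassersteinDist K c πnom πnom ≤ s := by
    have hle := wasserstein_le c hc πnom πnom
      (fun i j => if i = j then πnom j else 0) ?_ ?_ ?_
    · refine le_trans hle ?_
      have hzero : ∑ i, ∑ j, (if i = j then πnom j else 0) * c i j = 0 := by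
        refine Finset.sum_eq_zero fun i _ => ?_
        have h5 : ∀ j : Fin K, (if i = j then πnom j else 0) * c i j
            = if i = j then πnom j * c i j else 0 := by
          intro j
          by_cases h : i = j
          · simp only [if_pos h]
          · simp only [if_neg h, zero_mul]
        simp only [h5, Finset.sum_ite_eq, Finset.mem_univ, if_true, hcdiag i, mul_zero]
      rw [hzero]; exact le_of_lt hs
    · intro i j
      by_cases h : i = j
      · simp only [if_pos h]; exact hπnom j
      · simp only [if_neg h]; exact le_refl 0
    · intro i; simp [Finset.sum_ite_eq]
    · intro j; simp [Finset.sum_ite_eq']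
  have hPmem : (∑ k, πnom k * x k) ∈ P := ⟨πnom, hπnom, hπnom1, hWnom, rfl⟩
  have hPne : P.Nonempty := ⟨_, hPmem⟩
  have hPbdd : BddBelow P := by
    refine ⟨⨅ i, x i, ?_⟩
    rintro v ⟨π, h0, h1, _, rfl⟩
    have heq : (⨅ i, x i) = ∑ k, π k * (⨅ i, x i) := by
      rw [← Finset.sum_mul, h1, one_mul]
    rw [heq]
    exact Finset.sum_le_sum fun k _ =>
      mul_le_mul_of_nonneg_left (fin_iInf_le x k) (h0 k)
  have hDne : Dl.Nonempty := ⟨_, 0, le_refl 0, rfl⟩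
  have hweak : ∀ d ∈ Dl, ∀ v ∈ P, d ≤ v := by
    rintro d ⟨lam, hlam, rfl⟩ v ⟨π, h0, h1, hW, rfl⟩
    exact weak_duality c hc πnom hπnom hπnom1 s x lam hlam π h0 h1 hW
  have hDbdd : BddAbove Dl := ⟨∑ k, πnom k * x k, fun d hd => hweak d hd _ hPmem⟩
  apply le_antisymm
  · refine le_of_forall_sub_le fun ε hε => ?_
    have hnomem : ∀ Q : Fin K → Fin K → ℝ, (∀ i j, 0 ≤ Q i j) →
        (∀ j, ∑ i, Q i j = πnom j) → (∑ i, ∑ j, Q i j * c i j ≤ s) →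
        (∑ i, ∑ j, Q i j * x i ≤ sInf P - ε) → False := by
      intro Q h0 hcol hcost hval
      set π : Fin K → ℝ := fun i => ∑ j, Q i j with hπdef
      have hπ0 : ∀ k, 0 ≤ π k := fun k => Finset.sum_nonneg fun j _ => h0 k j
      have hπ1 : ∑ k, π k = 1 := by
        rw [hπdef]
        rw [Finset.sum_comm]
        simp only [hcol]
        exact hπnom1
      have hW : wassersteinDist K c π πnom ≤ s :=
        le_trans (wasserstein_le c hc π πnom Q h0 (fun i => rfl) hcol) hcost
      have hvmem : (∑ k, π k * x k) ∈ P := ⟨π, hπ0, hπ1, hW, rfl⟩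
      have h6 : ∑ k, π k * x k = ∑ i, ∑ j, Q i j * x i := by
        refine Finset.sum_congr rfl fun i _ => ?_
        rw [hπdef, Finset.sum_mul]
      have h7 := csInf_le hPbdd hvmem
      rw [h6] at h7
      linarith
    obtain ⟨lam, hlam, hgt⟩ := exists_dual_lam c hc hcdiag πnom hπnom hπnom1
      s hs x (sInf P) ε hε hnomem
    have hdmem : ((∑ j, πnom j * ⨅ i : Fin K, (x i + lam * c i j)) - s * lam) ∈ Dl :=
      ⟨lam, hlam, rfl⟩
    linarith [le_csSup hDbdd hdmem]
  · exact csSup_le hDne fun d hd => le_csInf hPne fun v hv => hweak d hd v hv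
end
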